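/- arXiv:2102.04309 — 3 statements merged into one kernel-verified Lean document; each statement's English description precedes it below -/
import Mathlib

section
/- Let n ∈ ℕ, let V : ℝ^n → ℝ be continuous and nonnegative, let R > 0 and set V̄ := sup_{‖z‖ ≤ R} V(z). Suppose V is Lipschitz with constant L_V > 0 on the closed ball of radius R + (2 V̄)^{1/2} centered at the origin. Let ε₁ > 0 and let α ∈ (0,1) satisfy L_V · (2 V̄)^{1/2} · α ≤ ε₁/2. Then for every x with ‖x‖ ≤ R one has V_α(x) ≤ V(x) ≤ V_α(x) + ε₁. -/
open Metric

/-- Inf-convolution (Moreau–Yosida regularization) of `V` with parameter `α`. -/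
noncomputable def infConv {n : ℕ} (V : EuclideanSpace ℝ (Fin n) → ℝ) (α : ℝ)
    (x : EuclideanSpace ℝ (Fin n)) : ℝ :=
  ⨅ y : EuclideanSpace ℝ (Fin n), (V y + ‖y - x‖ ^ 2 / (2 * α ^ 2))

/-!
Proof idea: `V_α(x) ≤ V(x)` by taking `y = x`. For the other bound, split the competitors `y` at
the radius `r = α √(2 V̄)`. Far from `x` the quadratic penalty already exceeds `V̄ ≥ V(x)`, and
`V(y) ≥ 0`. Near `x`, `y` stays in the ball of radius `R + √(2 V̄)` because `α < 1`, so the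
Lipschitz bound gives `V(x) - V(y) ≤ L_V r ≤ ε₁ / 2`.
-/

section InfConv

variable {n : ℕ} {V : EuclideanSpace ℝ (Fin n) → ℝ}

theorem infConv_le_self (hV : BddBelow (Set.range V)) (α : ℝ) (x : EuclideanSpace ℝ (Fin n)) :
    infConv V α x ≤ V x := by
  obtain ⟨m, hm⟩ := hV
  have hbdd : BddBelow (Set.range fun y => V y + ‖y - x‖ ^ 2 / (2 * α ^ 2)) := by
    refine ⟨m, ?_⟩
    rintro _ ⟨y, rfl⟩
    have hq : 0 ≤ ‖y - x‖ ^ 2 / (2 * α ^ 2) := by positivity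
    linarith [hm ⟨y, rfl⟩]
  simpa [infConv] using ciInf_le hbdd x

theorem le_infConv_add (hV : ∀ z, 0 ≤ V z) {α r δ : ℝ} {x : EuclideanSpace ℝ (Fin n)}
    (hr : 0 ≤ r) (hfar : V x ≤ r ^ 2 / (2 * α ^ 2))
    (hnear : ∀ y, ‖y - x‖ ≤ r → V x ≤ V y + δ) :
    V x ≤ infConv V α x + δ := by
  rw [← sub_le_iff_le_add]
  refine le_ciInf fun y => ?_
  have hq : 0 ≤ ‖y - x‖ ^ 2 / (2 * α ^ 2) := by positivity
  rcases le_or_gt ‖y - x‖ r with hyx | hyx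
  · linarith [hnear y hyx]
  · have hδ : 0 ≤ δ := by simpa using hnear x (by simpa using hr)
    have hpenalty : r ^ 2 / (2 * α ^ 2) ≤ ‖y - x‖ ^ 2 / (2 * α ^ 2) := by
      gcongr
    linarith [hV y]

end InfConv

theorem stmt1_general (n : ℕ) (V : EuclideanSpace ℝ (Fin n) → ℝ)
    (hVc : Continuous V) (hVnn : ∀ z, 0 ≤ V z)
    (R : ℝ)
    (Vbar : ℝ) (hVbar : Vbar = sSup (V '' closedBall (0 : EuclideanSpace ℝ (Fin n)) R))
    (L_V : ℝ) (hLV : 0 < L_V)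
    (hLip : ∀ a ∈ closedBall (0 : EuclideanSpace ℝ (Fin n)) (R + Real.sqrt (2 * Vbar)),
      ∀ b ∈ closedBall (0 : EuclideanSpace ℝ (Fin n)) (R + Real.sqrt (2 * Vbar)),
        |V a - V b| ≤ L_V * ‖a - b‖)
    (ε₁ α : ℝ) (hε₁ : 0 < ε₁) (hα : α ∈ Set.Ioo (0 : ℝ) 1)
    (hcond : L_V * Real.sqrt (2 * Vbar) * α ≤ ε₁ / 2) :
    ∀ x : EuclideanSpace ℝ (Fin n), ‖x‖ ≤ R →
      infConv V α x ≤ V x ∧ V x ≤ infConv V α x + ε₁ := by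
  obtain ⟨hα0, hα1⟩ := hα
  intro x hx
  refine ⟨infConv_le_self ⟨0, by rintro _ ⟨z, rfl⟩; exact hVnn z⟩ α x, ?_⟩
  have hxR : x ∈ closedBall 0 R := by simpa using hx
  have hVx : V x ≤ Vbar :=
    hVbar ▸ le_csSup ((isCompact_closedBall _ _).image hVc).bddAbove ⟨x, hxR, rfl⟩
  set s := Real.sqrt (2 * Vbar)
  have hs : 0 ≤ s := Real.sqrt_nonneg _
  refine le_infConv_add hVnn (r := α * s) (by positivity) ?_ fun y hyx => ?_
  · rw [mul_pow, Real.sq_sqrt (by linarith [hVnn x])]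
    field_simp
    linarith
  · have hαs : α * s ≤ s := mul_le_of_le_one_left hs hα1.le
    have hx' : x ∈ closedBall 0 (R + s) := by
      simp only [mem_closedBall, dist_zero_right]
      linarith
    have hy : y ∈ closedBall 0 (R + s) := by
      simp only [mem_closedBall, dist_zero_right]
      linarith [norm_le_norm_add_norm_sub' y x]
    have hLxy : L_V * ‖x - y‖ ≤ L_V * s * α := by
      rw [norm_sub_rev, mul_assoc, mul_comm s]
      gcongr
    linarith [le_of_abs_le (hLip x hx' y hy)]

theorem stmt1 (n : ℕ) (V : EuclideanSpace ℝ (Fin n) → ℝ)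
    (hVc : Continuous V) (hVnn : ∀ z, 0 ≤ V z)
    (R : ℝ) (hR : 0 < R)
    (Vbar : ℝ) (hVbar : Vbar = sSup (V '' closedBall (0 : EuclideanSpace ℝ (Fin n)) R))
    (L_V : ℝ) (hLV : 0 < L_V)
    (hLip : ∀ a ∈ closedBall (0 : EuclideanSpace ℝ (Fin n)) (R + Real.sqrt (2 * Vbar)),
      ∀ b ∈ closedBall (0 : EuclideanSpace ℝ (Fin n)) (R + Real.sqrt (2 * Vbar)),
        |V a - V b| ≤ L_V * ‖a - b‖)
    (ε₁ α : ℝ) (hε₁ : 0 < ε₁) (hα : α ∈ Set.Ioo (0 : ℝ) 1)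
    (hcond : L_V * Real.sqrt (2 * Vbar) * α ≤ ε₁ / 2) :
    ∀ x : EuclideanSpace ℝ (Fin n), ‖x‖ ≤ R →
      infConv V α x ≤ V x ∧ V x ≤ infConv V α x + ε₁ :=
  stmt1_general n V hVc hVnn R Vbar hVbar L_V hLV hLip ε₁ α hε₁ hα hcond
end

section
/- Let n ∈ ℕ, let V : ℝ^n → ℝ be nonnegative, let α > 0, ε ≥ 0, χ ≥ 0 and x ∈ ℝ^n. Let y ∈ ℝ^n be an ε-minimizer of the inf-convolution infimum at x, let ỹ ∈ ℝ^n satisfy ‖ỹ − y‖ ≤ χ, and set ζ̃ := (x − ỹ)/α². Then for every h ≥ 0 and every θ ∈ ℝ^n one has V_α(x + hθ) ≤ V_α(x) + h⟨ζ̃, θ⟩ + h²‖θ‖²/(2α²) + ε + h (χ/α²) ‖θ‖. -/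
open scoped RealInnerProductSpace

/-- `y` is an `ε`-minimizer of the inf-convolution infimum at `x`. -/
def IsEpsMinimizer {n : ℕ} (V : EuclideanSpace ℝ (Fin n) → ℝ) (α ε : ℝ)
    (x y : EuclideanSpace ℝ (Fin n)) : Prop :=
  V y + ‖y - x‖ ^ 2 / (2 * α ^ 2) ≤ infConv V α x + ε

theorem stmt7 (n : ℕ) (V : EuclideanSpace ℝ (Fin n) → ℝ) (hVnn : ∀ z, 0 ≤ V z)
    (α ε χ : ℝ) (hα : 0 < α) (hε : 0 ≤ ε) (hχ : 0 ≤ χ)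
    (x y ytil : EuclideanSpace ℝ (Fin n))
    (hy : IsEpsMinimizer V α ε x y) (hytil : ‖ytil - y‖ ≤ χ) :
    ∀ (h : ℝ), 0 ≤ h → ∀ θ : EuclideanSpace ℝ (Fin n),
      infConv V α (x + h • θ) ≤
        infConv V α x + h * ⟪(α ^ 2)⁻¹ • (x - ytil), θ⟫ + h ^ 2 * ‖θ‖ ^ 2 / (2 * α ^ 2)
          + ε + h * (χ / α ^ 2) * ‖θ‖ := by
  intro h hh θ
  have hα2 : (0:ℝ) < α ^ 2 := by positivity
  -- step 1 : infConv at x + h•θ is at most value at y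
  have hle : infConv V α (x + h • θ) ≤ V y + ‖y - (x + h • θ)‖ ^ 2 / (2 * α ^ 2) := by
    apply ciInf_le
    refine ⟨0, ?_⟩
    rintro _ ⟨z, rfl⟩
    have := hVnn z
    positivity
  -- expand the squared norm
  have hexp : ‖y - (x + h • θ)‖ ^ 2
      = ‖y - x‖ ^ 2 - 2 * (h * ⟪y - x, θ⟫) + h ^ 2 * ‖θ‖ ^ 2 := by
    have : y - (x + h • θ) = (y - x) - h • θ := by abel
    rw [this, norm_sub_sq_real, real_inner_smul_right, norm_smul, Real.norm_eq_abs]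
    rw [mul_pow, sq_abs]
  have hcs : ⟪ytil - y, θ⟫ ≤ χ * ‖θ‖ := by
    calc ⟪ytil - y, θ⟫ ≤ ‖ytil - y‖ * ‖θ‖ := real_inner_le_norm _ _
    _ ≤ χ * ‖θ‖ := by gcongr
  have hinner : ⟪x - y, θ⟫ = ⟪x - ytil, θ⟫ + ⟪ytil - y, θ⟫ := by
    rw [← inner_add_left]; congr 1; abel
  have key : - (h * ⟪y - x, θ⟫) ≤ h * ⟪x - ytil, θ⟫ + h * (χ * ‖θ‖) := by
    have h1 : - ⟪y - x, θ⟫ = ⟪x - y, θ⟫ := by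
      rw [← inner_neg_left]; congr 1; abel
    rw [neg_mul_eq_mul_neg, h1, hinner, mul_add]
    gcongr
  have hsmul : ⟪(α ^ 2)⁻¹ • (x - ytil), θ⟫ = (α^2)⁻¹ * ⟪x - ytil, θ⟫ :=
    real_inner_smul_left _ _ _
  calc infConv V α (x + h • θ)
      ≤ V y + ‖y - (x + h • θ)‖ ^ 2 / (2 * α ^ 2) := hle
    _ = (V y + ‖y - x‖ ^ 2 / (2 * α ^ 2))
        + (- 2 * (h * ⟪y - x, θ⟫) + h ^ 2 * ‖θ‖ ^ 2) / (2 * α ^ 2) := by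
        rw [hexp]; ring
    _ ≤ (infConv V α x + ε)
        + (2 * (h * ⟪x - ytil, θ⟫ + h * (χ * ‖θ‖)) + h ^ 2 * ‖θ‖ ^ 2) / (2 * α ^ 2) := by
        exact add_le_add hy ((div_le_div_iff_of_pos_right (by positivity)).mpr (by linarith [key]))
    _ = infConv V α x + h * ((α^2)⁻¹ * ⟪x - ytil, θ⟫) + h ^ 2 * ‖θ‖ ^ 2 / (2 * α ^ 2)
        + ε + h * (χ / α ^ 2) * ‖θ‖ := by
        field_simp
        ring
    _ = _ := by rw [hsmul]
end

section
/- Let n ∈ ℕ, let V : ℝ^n → ℝ, let ỹ, ζ ∈ ℝ^n, let F ⊆ ℝ^n be nonempty with ‖θ‖ ≤ f̄ for all θ ∈ F (f̄ > 0), and let α > 0, χ ≥ 0, w̄ > 0, ε > 0. Assume: (i) for every θ ∈ F, ⟨ζ, θ⟩ ≤ ( V(ỹ + εθ) − V(ỹ) )/ε + (ε/(2α²))‖θ‖² + (χ/α²)‖θ‖ + ε; (ii) for every θ ∈ F, | ( V(ỹ + εθ) − V(ỹ) )/ε − D_θ V(ỹ) | ≤ w̄/5; (iii) inf_{θ ∈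 F} D_θ V(ỹ) ≤ −w̄; (iv) ε ≤ ( w̄ α²/10 − 2 χ f̄ ) / ( 2α² + f̄² ). Then inf_{θ ∈ F} ⟨ζ, θ⟩ ≤ −(3/4) w̄. -/
open scoped RealInnerProductSpace

/-- Generalized directional lower derivative of `V` at `x` in direction `θ`. -/
noncomputable def lowerDini {n : ℕ} (V : EuclideanSpace ℝ (Fin n) → ℝ)
    (x θ : EuclideanSpace ℝ (Fin n)) : ℝ :=
  Filter.liminf (fun μ : ℝ => (V (x + μ • θ) - V x) / μ) (nhdsWithin 0 (Set.Ioi (0 : ℝ)))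

theorem stmt13 (n : ℕ) (V : EuclideanSpace ℝ (Fin n) → ℝ)
    (ytil ζ : EuclideanSpace ℝ (Fin n))
    (F : Set (EuclideanSpace ℝ (Fin n))) (hFne : F.Nonempty)
    (fbar α χ wbar ε : ℝ)
    (hfbar : 0 < fbar) (hα : 0 < α) (hχ : 0 ≤ χ) (hwbar : 0 < wbar) (hε : 0 < ε)
    (hFbound : ∀ θ ∈ F, ‖θ‖ ≤ fbar)
    (h1 : ∀ θ ∈ F, ⟪ζ, θ⟫ ≤ (V (ytil + ε • θ) - V ytil) / ε
      + (ε / (2 * α ^ 2)) * ‖θ‖ ^ 2 + (χ / α ^ 2) * ‖θ‖ + ε)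
    (h2 : ∀ θ ∈ F, |(V (ytil + ε • θ) - V ytil) / ε - lowerDini V ytil θ| ≤ wbar / 5)
    (h3 : sInf ((fun θ => lowerDini V ytil θ) '' F) ≤ -wbar)
    (h4 : ε ≤ (wbar * α ^ 2 / 10 - 2 * χ * fbar) / (2 * α ^ 2 + fbar ^ 2)) :
    sInf ((fun θ => ⟪ζ, θ⟫) '' F) ≤ -(3 / 4) * wbar := by
  have hA : (0:ℝ) < 2 * α ^ 2 + fbar ^ 2 := by positivity
  have hε4 : ε * (2 * α ^ 2 + fbar ^ 2) ≤ wbar * α ^ 2 / 10 - 2 * χ * fbar :=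
    (le_div_iff₀ hA).mp h4
  have key : ∀ θ ∈ F, ⟪ζ, θ⟫ ≤ lowerDini V ytil θ + wbar / 4 := by
    intro θ hθ
    have hn : (0:ℝ) ≤ ‖θ‖ := norm_nonneg θ
    have hnf := hFbound θ hθ
    have hn2 : ‖θ‖ ^ 2 ≤ fbar ^ 2 := by nlinarith
    have h1' := h1 θ hθ
    have h2' := abs_le.mp (h2 θ hθ)
    have hsmall : (ε / (2 * α ^ 2)) * ‖θ‖ ^ 2 + (χ / α ^ 2) * ‖θ‖ + ε ≤ wbar / 20 := by
      have heq : (ε / (2 * α ^ 2)) * ‖θ‖ ^ 2 + (χ / α ^ 2) * ‖θ‖ + ε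
          = (ε * ‖θ‖ ^ 2 + 2 * χ * ‖θ‖ + 2 * ε * α ^ 2) / (2 * α ^ 2) := by
        field_simp
      rw [heq, div_le_div_iff₀ (by positivity) (by norm_num : (0:ℝ) < 20)]
      nlinarith [mul_nonneg hχ hn, mul_le_mul_of_nonneg_left hnf hχ,
        mul_le_mul_of_nonneg_left hn2 hε.le]
    linarith
  have hbddA : BddBelow ((fun θ => ⟪ζ, θ⟫) '' F) := by
    refine ⟨-(‖ζ‖ * fbar), ?_⟩
    rintro _ ⟨θ, hθ, rfl⟩
    have h := abs_real_inner_le_norm ζ θ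
    have := hFbound θ hθ
    have hz : (0:ℝ) ≤ ‖ζ‖ := norm_nonneg ζ
    have h' : -(‖ζ‖ * ‖θ‖) ≤ ⟪ζ, θ⟫ := neg_le_of_abs_le h
    nlinarith [mul_le_mul_of_nonneg_left this hz]
  have hle : sInf ((fun θ => ⟪ζ, θ⟫) '' F) - wbar / 4
      ≤ sInf ((fun θ => lowerDini V ytil θ) '' F) := by
    refine le_csInf (hFne.image _) ?_
    rintro _ ⟨θ, hθ, rfl⟩
    have h := csInf_le hbddA (Set.mem_image_of_mem _ hθ)
    have := key θ hθ
    linarith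
  linarith
end
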